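/- In the pointed untimed two-agent model (M, q0q0) built from two copies of the agent template a (states q0, q1, q2, q3 with transitions q0 →(α,β1) q1, q0 →(α,β2) q3, q1 →(α2,β) q2, q3 →(α2,β) q2, self-loops (α1,β) on q1 and q3 and (α,β) on q2, and proposition p holding only at q2), the SCTL formula φ ≡ ⟨⟨1⟩⟩(∃F_{[0,∞)} p ∧ ∃G_{[0,∞)} ¬p) holds for every strategy type S ∈ {ir, Ir, iR, IR}, whereas in the pointed model (M', q0'q0') built from two copies of the template a' (states q0', q1', q2' with transitions q0' →(α,β1) q1', q0' →(α,β2) q1', q1' →(α2,β) q2', self-loop (α1,β) on q1' and (α,β) on q2', with p only at q2'), the formula φ does not hold for any strategy type S. -/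

import Mathlib

/-- Actions: `a`, `a1`, `a2` stand for α, α₁, α₂ (agent 1) and
`b`, `b1`, `b2` for β, β₁, β₂ (agent 2). -/
inductive Ac | a | a1 | a2 | b | b1 | b2
deriving DecidableEq

/-- States of `M` (both agents are copies of the template `a`; each agent's local
state uniquely identifies the global state, so global states are identified with
the template states). -/
inductive StM | q0 | q1 | q2 | q3
deriving DecidableEq

/-- States of `M'`. -/
inductive StM' | q0 | q1 | q2
deriving DecidableEq

/-- An untimed two-agent concurrent model. -/
structure CGS where
  State : Type
  proto : Fin 2 → State → Set Ac
  trans : State → (Fin 2 → Ac) → State → Prop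
  labelP : State → Prop

def protoM (i : Fin 2) (s : StM) : Set Ac :=
  if i = 0 then
    match s with
    | .q0 => {Ac.a}
    | .q1 => {Ac.a1, Ac.a2}
    | .q2 => {Ac.a}
    | .q3 => {Ac.a1, Ac.a2}
  else
    match s with
    | .q0 => {Ac.b1, Ac.b2}
    | _ => {Ac.b}

/-- Transitions of `M`: q0 →(α,β1) q1, q0 →(α,β2) q3, q1 →(α2,β) q2, q3 →(α2,β) q2,
self-loops (α1,β) on q1 and q3, and (α,β) on q2. -/
def transM (s : StM) (c : Fin 2 → Ac) (s' : StM) : Prop :=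
  (s = .q0 ∧ c 0 = Ac.a ∧ c 1 = Ac.b1 ∧ s' = .q1) ∨
  (s = .q0 ∧ c 0 = Ac.a ∧ c 1 = Ac.b2 ∧ s' = .q3) ∨
  (s = .q1 ∧ c 0 = Ac.a2 ∧ c 1 = Ac.b ∧ s' = .q2) ∨
  (s = .q3 ∧ c 0 = Ac.a2 ∧ c 1 = Ac.b ∧ s' = .q2) ∨
  (s = .q1 ∧ c 0 = Ac.a1 ∧ c 1 = Ac.b ∧ s' = .q1) ∨
  (s = .q3 ∧ c 0 = Ac.a1 ∧ c 1 = Ac.b ∧ s' = .q3) ∨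
  (s = .q2 ∧ c 0 = Ac.a ∧ c 1 = Ac.b ∧ s' = .q2)

/-- The model `M`: proposition `p` holds only at `q2`. -/
def Mcgs : CGS := ⟨StM, protoM, transM, fun s => s = .q2⟩

def protoM' (i : Fin 2) (s : StM') : Set Ac :=
  if i = 0 then
    match s with
    | .q0 => {Ac.a}
    | .q1 => {Ac.a1, Ac.a2}
    | .q2 => {Ac.a}
  else
    match s with
    | .q0 => {Ac.b1, Ac.b2}
    | _ => {Ac.b}

/-- Transitions of `M'`: q0' →(α,β1) q1', q0' →(α,β2) q1', q1' →(α2,β) q2',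
self-loop (α1,β) on q1' and (α,β) on q2'. -/
def transM' (s : StM') (c : Fin 2 → Ac) (s' : StM') : Prop :=
  (s = .q0 ∧ c 0 = Ac.a ∧ c 1 = Ac.b1 ∧ s' = .q1) ∨
  (s = .q0 ∧ c 0 = Ac.a ∧ c 1 = Ac.b2 ∧ s' = .q1) ∨
  (s = .q1 ∧ c 0 = Ac.a2 ∧ c 1 = Ac.b ∧ s' = .q2) ∨
  (s = .q1 ∧ c 0 = Ac.a1 ∧ c 1 = Ac.b ∧ s' = .q1) ∨
  (s = .q2 ∧ c 0 = Ac.a ∧ c 1 = Ac.b ∧ s' = .q2)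

/-- The model `M'`: proposition `p` holds only at `q2'`. -/
def M'cgs : CGS := ⟨StM', protoM', transM', fun s => s = .q2⟩

/-- Strategy types: memoryless/perfect-recall × imperfect/perfect information. -/
inductive StrategyType | ir | Ir | iR | IR

/-- A strategy of agent 1 is represented as a function from histories — a strict
past (most recent state first) together with the current state — to actions. -/
def Strategy (G : CGS) : Type := List G.State → G.State → Ac

/-- Memoryless (`r`) strategies ignore the history. -/
def Memoryless {G : CGS} (σ : Strategy G) : Prop :=
  ∀ h1 h2 s, σ h1 s = σ h2 s

/-- Imperfect-information (`i`) strategies depend only on agent 1's local images of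
the history, via the observation map `loc`. -/
def Uniform {G : CGS} {L : Type} (loc : G.State → L) (σ : Strategy G) : Prop :=
  ∀ h1 s1 h2 s2, h1.map loc = h2.map loc → loc s1 = loc s2 → σ h1 s1 = σ h2 s2

/-- The constraint imposed on agent 1's strategy by each strategy type. -/
def StratOK (G : CGS) {L : Type} (loc : G.State → L) :
    StrategyType → Strategy G → Prop
  | .ir, σ => Memoryless σ ∧ Uniform loc σ
  | .Ir, σ => Memoryless σ
  | .iR, σ => Uniform loc σ
  | .IR, _ => True

/-- The strict past of position `k` on the path `π`, most recent state first. -/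
def hist {St : Type} (π : ℕ → St) (k : ℕ) : List St :=
  ((List.range k).map π).reverse

/-- A protocol-compliant joint action at `s`. -/
def jointOK (G : CGS) (s : G.State) (c : Fin 2 → Ac) : Prop :=
  ∀ i, c i ∈ G.proto i s

/-- `π` is an outcome path of agent 1's strategy `σ` from `s0`: at every step all
agents play protocol-compliant actions, agent 1 follows `σ`, and the opponent
(agent 2) chooses freely. -/
def Outcome (G : CGS) (σ : Strategy G) (s0 : G.State) (π : ℕ → G.State) : Prop :=
  π 0 = s0 ∧
  ∀ k, ∃ c : Fin 2 → Ac, jointOK G (π k) c ∧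
    c 0 = σ (hist π k) (π k) ∧ G.trans (π k) c (π (k + 1))

/-- `G, s0 ⊨ ⟨⟨1⟩⟩(∃F_{[0,∞)} p ∧ ∃G_{[0,∞)} ¬p)` under `S`-strategies: agent 1 has
a protocol-compliant strategy of type `S` whose outcome set contains a path on which
`p` eventually holds and a path on which `p` never holds. -/
def SatPhi (G : CGS) {L : Type} (loc : G.State → L) (S : StrategyType)
    (s0 : G.State) : Prop :=
  ∃ σ : Strategy G,
    (∀ h s, σ h s ∈ G.proto 0 s) ∧ StratOK G loc S σ ∧
    (∃ π : ℕ → G.State, Outcome G σ s0 π ∧ ∃ k, G.labelP (π k)) ∧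
    (∃ π : ℕ → G.State, Outcome G σ s0 π ∧ ∀ k, ¬ G.labelP (π k))

/-- Agent 1's winning strategy in `M`. -/
def sigM : Strategy Mcgs := fun _ s =>
  match s with
  | .q0 => Ac.a
  | .q1 => Ac.a2
  | .q2 => Ac.a
  | .q3 => Ac.a1

def pi1M : ℕ → StM
  | 0 => .q0
  | 1 => .q1
  | _ + 2 => .q2

def pi2M : ℕ → StM
  | 0 => .q0
  | _ + 1 => .q3

lemma satM (S : StrategyType) : SatPhi Mcgs id S StM.q0 := by
  refine ⟨sigM, ?_, ?_, ⟨pi1M, ⟨rfl, ?_⟩, 2, rfl⟩, ⟨pi2M, ⟨rfl, ?_⟩, ?_⟩⟩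
  · intro h s
    cases s <;> simp [sigM, Mcgs, protoM]
  · cases S with
    | ir => exact ⟨fun _ _ _ => rfl, fun h1 s1 h2 s2 _ hs => by cases hs; rfl⟩
    | Ir => exact fun _ _ _ => rfl
    | iR => exact fun h1 s1 h2 s2 _ hs => by cases hs; rfl
    | IR => trivial
  · intro k
    match k with
    | 0 =>
        refine ⟨fun i => if i = 0 then Ac.a else Ac.b1, ?_, ?_, ?_⟩
        · intro i; fin_cases i <;> simp [Mcgs, protoM, pi1M]
        · rfl
        · exact Or.inl ⟨rfl, rfl, rfl, rfl⟩
    | 1 =>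
        refine ⟨fun i => if i = 0 then Ac.a2 else Ac.b, ?_, ?_, ?_⟩
        · intro i; fin_cases i <;> simp [Mcgs, protoM, pi1M]
        · rfl
        · exact Or.inr (Or.inr (Or.inl ⟨rfl, rfl, rfl, rfl⟩))
    | (n + 2) =>
        refine ⟨fun i => if i = 0 then Ac.a else Ac.b, ?_, ?_, ?_⟩
        · intro i; fin_cases i <;> simp [Mcgs, protoM, pi1M]
        · rfl
        · exact Or.inr (Or.inr (Or.inr (Or.inr (Or.inr (Or.inr ⟨rfl, rfl, rfl, rfl⟩)))))
  · intro k
    match k with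
    | 0 =>
        refine ⟨fun i => if i = 0 then Ac.a else Ac.b2, ?_, ?_, ?_⟩
        · intro i; fin_cases i <;> simp [Mcgs, protoM, pi2M]
        · rfl
        · exact Or.inr (Or.inl ⟨rfl, rfl, rfl, rfl⟩)
    | (n + 1) =>
        refine ⟨fun i => if i = 0 then Ac.a1 else Ac.b, ?_, ?_, ?_⟩
        · intro i; fin_cases i <;> simp [Mcgs, protoM, pi2M]
        · rfl
        · exact Or.inr (Or.inr (Or.inr (Or.inr (Or.inr (Or.inl ⟨rfl, rfl, rfl, rfl⟩)))))
  · intro k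
    match k with
    | 0 => simp [Mcgs, pi2M]
    | (n + 1) => simp [Mcgs, pi2M]

lemma notSatM' (S : StrategyType) : ¬ SatPhi M'cgs id S StM'.q0 := by
  rintro ⟨σ, -, -, ⟨π1, ⟨h10, h1s⟩, k0, hpk⟩, ⟨π2, ⟨h20, h2s⟩, hnever⟩⟩
  -- π2 stays at q1 forever (after step 0), and σ plays a1 there
  have hπ2 : ∀ n, π2 (n + 1) = StM'.q1 := by
    intro n
    induction n with
    | zero =>
        obtain ⟨c, -, -, ht⟩ := h2s 0
        rw [h20] at ht
        rcases ht with ⟨_, _, _, h⟩ | ⟨_, _, _, h⟩ | ⟨h, _⟩ | ⟨h, _⟩ | ⟨h, _⟩ <;>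
          first | exact h | simp_all
    | succ n ih =>
        obtain ⟨c, -, -, ht⟩ := h2s (n + 1)
        rw [ih] at ht
        rcases ht with ⟨h, _⟩ | ⟨h, _⟩ | ⟨_, _, _, h⟩ | ⟨_, _, _, h⟩ | ⟨h, _⟩
        · simp_all
        · simp_all
        · exact absurd h (hnever (n + 2))
        · exact h
        · simp_all
  have hσ2 : ∀ n, σ (hist π2 (n + 1)) StM'.q1 = Ac.a1 := by
    intro n
    obtain ⟨c, -, hc0, ht⟩ := h2s (n + 1)
    rw [hπ2 n] at ht hc0
    rcases ht with ⟨h, _⟩ | ⟨h, _⟩ | ⟨_, _, _, h⟩ | ⟨_, hc, _, _⟩ | ⟨h, _⟩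
    · simp_all
    · simp_all
    · exact absurd h (hnever (n + 2))
    · rw [← hc0, hc]
    · simp_all
  -- π1 agrees with π2 as long as it hasn't reached q2
  have hagree : ∀ n, (∀ i, i ≤ n → π1 i ≠ StM'.q2) → π1 n = π2 n := by
    intro n
    induction n with
    | zero => intro _; rw [h10, h20]
    | succ n ih =>
        intro hne
        have hn := ih (fun i hi => hne i (Nat.le_succ_of_le hi))
        obtain ⟨c, -, -, ht⟩ := h1s n
        rw [hπ2 n]
        match n, hn with
        | 0, hn =>
            rw [h10] at ht
            rcases ht with ⟨_, _, _, h⟩ | ⟨_, _, _, h⟩ | ⟨h, _⟩ | ⟨h, _⟩ | ⟨h, _⟩ <;>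
              first | exact h | simp_all
        | (m + 1), hn =>
            rw [hn, hπ2 m] at ht
            rcases ht with ⟨h, _⟩ | ⟨h, _⟩ | ⟨_, _, _, h⟩ | ⟨_, _, _, h⟩ | ⟨h, _⟩
            · simp_all
            · simp_all
            · exact absurd (hne (m + 2) le_rfl) (fun h' => h' h)
            · exact h
            · simp_all
  -- minimal time π1 reaches q2
  have hex : ∃ k, π1 k = StM'.q2 := ⟨k0, hpk⟩
  classical
  have hk2 : π1 (Nat.find hex) = StM'.q2 := Nat.find_spec hex
  have hkmin : ∀ i, i < Nat.find hex → π1 i ≠ StM'.q2 := fun i hi => Nat.find_min hex hi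
  have hkpos : Nat.find hex ≠ 0 := by
    intro h; rw [h, h10] at hk2; exact StM'.noConfusion hk2
  obtain ⟨n, hkn⟩ := Nat.exists_eq_succ_of_ne_zero hkpos
  rw [hkn] at hk2 hkmin
  have hagr : ∀ i, i ≤ n → π1 i = π2 i := fun i hi =>
    hagree i (fun j hj => hkmin j (Nat.lt_succ_of_le (le_trans hj hi)))
  have hn1 : π1 n = π2 n := hagr n le_rfl
  -- n ≥ 1 since π1 0 = q0 cannot step to q2
  have hnpos : n ≠ 0 := by
    intro h
    subst h
    obtain ⟨c, -, -, ht⟩ := h1s 0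
    rw [h10, hk2] at ht
    rcases ht with ⟨_, _, _, h⟩ | ⟨_, _, _, h⟩ | ⟨h, _⟩ | ⟨h, _⟩ | ⟨h, _⟩ <;> simp_all
  obtain ⟨m, rfl⟩ := Nat.exists_eq_succ_of_ne_zero hnpos
  -- the histories agree
  have hhist : hist π1 (m + 1) = hist π2 (m + 1) := by
    unfold hist
    congr 1
    exact List.map_congr_left (fun i hi =>
      hagr i (Nat.le_of_lt (List.mem_range.mp hi)))
  -- at step m+1, π1 is at q1 and steps to q2, so σ plays a2 there
  obtain ⟨c, -, hc0, ht⟩ := h1s (m + 1)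
  have hq1 : π1 (m + 1) = StM'.q1 := by rw [hn1, hπ2 m]
  rw [hq1] at ht hc0
  rw [hk2] at ht
  rcases ht with ⟨h, _⟩ | ⟨h, _⟩ | ⟨_, hc, _, _⟩ | ⟨_, _, _, h⟩ | ⟨h, _⟩
  · exact StM'.noConfusion h
  · exact StM'.noConfusion h
  · have := hσ2 m
    rw [← hhist, ← hc0, hc] at this
    exact Ac.noConfusion this
  · exact StM'.noConfusion h
  · exact StM'.noConfusion h

/-- **The SCTL formula `φ ≡ ⟨⟨1⟩⟩(∃F_{[0,∞)} p ∧ ∃G_{[0,∞)} ¬p)` holds in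
`(M, q0q0)` for every strategy type `S ∈ {ir, Ir, iR, IR}`, and fails in
`(M', q0'q0')` for every strategy type `S`.**  In both models each agent's local
state uniquely identifies the global state, so agent 1's observation map is the
identity. -/
theorem phi_holds_in_M_not_in_M' :
    (∀ S : StrategyType, SatPhi Mcgs id S StM.q0) ∧
    (∀ S : StrategyType, ¬ SatPhi M'cgs id S StM'.q0) := by
  exact ⟨satM, notSatM'⟩
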